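/- arXiv:1303.5847 — 3 statements merged into one kernel-verified Lean document; each statement's English description precedes it below -/
import Mathlib

section
/- Let P₁ and P₂ be integrable Poisson manifolds that are Morita equivalent via a symplectic manifold S with surjective submersions τ₁: S → P₁ (complete Poisson) and τ₂: S → P₂ (complete anti-Poisson) having connected simply connected fibers and symplectically orthogonal kernels: ker(dτ₁)_z = (ker(dτ₂)_z)^⊥ for all z ∈ S. Then the cotangent Lie algebroids T*P₁ → P₁ and T*P₂ → P₂ are quasi-equivalent, with witnessing subbundles L₁ = {(Π_S^♯(τ₁*α), α) : α ∈ T*P₁} ⊂ τ₁^!(T*P₁) and L₂ = {(Π_S^♯(τ₂*β), β) : β ∈ (T*P₂)^−} ⊂ τ₂^!(T*P₂)^−. -/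
/-!
Since the 2-form ω inverts Π_S^♯, the image of Π_S^♯ ∘ dτ₁^* is Π_S^♯ of the annihilator of
ker dτ₁, i.e. the ω-orthogonal of ker dτ₁, which is ker dτ₂ by symplectic orthogonality;
symmetrically for τ₂. This is condition (B); the anchor conditions are the (anti-)Poisson
property of τ_k, and (A) and (C) hold because L_k is the graph of a linear map on T*P_k.
-/

theorem range_comp_dualMap_eq_orthogonal_ker {K V W : Type*} [Field K]
    [AddCommGroup V] [Module K V] [AddCommGroup W] [Module K W]
    (π : Module.Dual K V →ₗ[K] V) (ω : V →ₗ[K] Module.Dual K V)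
    (hωπ : ∀ a, ω (π a) = a) (hπω : ∀ v, π (ω v) = v) (f : V →ₗ[K] W) :
    Set.range (fun a : Module.Dual K W => π (f.dualMap a)) =
      {v | ∀ w, f w = 0 → ω v w = 0} := by
  ext v
  have hrange : ω v ∈ LinearMap.range f.dualMap ↔ ∀ w, f w = 0 → ω v w = 0 := by
    rw [LinearMap.range_dualMap_eq_dualAnnihilator_ker, Submodule.mem_dualAnnihilator]
    rfl
  rw [Set.mem_ofPred_eq, ← hrange]
  constructor
  · rintro ⟨a, rfl⟩
    exact ⟨a, (hωπ _).symm⟩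
  · rintro ⟨a, ha⟩
    exact ⟨a, (congrArg π ha).trans (hπω v)⟩

theorem stmt7_general
    (S P₁ P₂ : Type)
    (TS : S → Type) (T₁ : P₁ → Type) (T₂ : P₂ → Type)
    [∀ z, AddCommGroup (TS z)] [∀ z, Module ℝ (TS z)]
    [∀ p, AddCommGroup (T₁ p)] [∀ p, Module ℝ (T₁ p)]
    [∀ p, AddCommGroup (T₂ p)] [∀ p, Module ℝ (T₂ p)]
    -- symplectic Poisson structure on S: Π_S^♯ with inverse ω
    (πS : ∀ z, Module.Dual ℝ (TS z) →ₗ[ℝ] TS z)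
    (ω : ∀ z, TS z →ₗ[ℝ] Module.Dual ℝ (TS z))
    (hinv₁ : ∀ (z : S) (a : Module.Dual ℝ (TS z)), ω z (πS z a) = a)
    (hinv₂ : ∀ (z : S) (v : TS z), πS z (ω z v) = v)
    -- Poisson structures on P₁, P₂
    (π₁ : ∀ p, Module.Dual ℝ (T₁ p) →ₗ[ℝ] T₁ p)
    (π₂ : ∀ p, Module.Dual ℝ (T₂ p) →ₗ[ℝ] T₂ p)
    (τ₁ : S → P₁) (τ₂ : S → P₂)
    (dτ₁ : ∀ z, TS z →ₗ[ℝ] T₁ (τ₁ z)) (dτ₂ : ∀ z, TS z →ₗ[ℝ] T₂ (τ₂ z))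
    -- τ₁ Poisson, τ₂ anti-Poisson
    (hPoisson : ∀ z, (dτ₁ z).comp ((πS z).comp (dτ₁ z).dualMap) = π₁ (τ₁ z))
    (hAnti : ∀ z, (dτ₂ z).comp ((πS z).comp (dτ₂ z).dualMap) = - π₂ (τ₂ z))
    -- ker(dτ₁) = (ker dτ₂)^⊥ and ker(dτ₂) = (ker dτ₁)^⊥ (symplectic orthogonality)
    (horth₁ : ∀ z, {v : TS z | dτ₁ z v = 0} = {v | ∀ w : TS z, dτ₂ z w = 0 → ω z v w = 0})
    (horth₂ : ∀ z, {v : TS z | dτ₂ z v = 0} = {v | ∀ w : TS z, dτ₁ z w = 0 → ω z v w = 0}) :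
    -- L₁ ⊂ τ₁^!(T*P₁): dτ₁(Π_S^♯ τ₁*α) = Π₁^♯ α (anchor of the cotangent algebroid)
    (∀ (z : S) (a : Module.Dual ℝ (T₁ (τ₁ z))),
      dτ₁ z (πS z ((dτ₁ z).dualMap a)) = π₁ (τ₁ z) a) ∧
    -- L₂ ⊂ τ₂^!(T*P₂)⁻: dτ₂(Π_S^♯ τ₂*β) = −Π₂^♯ β (opposite anchor)
    (∀ (z : S) (b : Module.Dual ℝ (T₂ (τ₂ z))),
      dτ₂ z (πS z ((dτ₂ z).dualMap b)) = - (π₂ (τ₂ z) b)) ∧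
    -- condition (A)
    (∀ (z : S) (w : TS z × Module.Dual ℝ (T₁ (τ₁ z))),
      w ∈ Set.range (fun a : Module.Dual ℝ (T₁ (τ₁ z)) => (πS z ((dτ₁ z).dualMap a), a)) →
      w.2 = 0 → w.1 = 0) ∧
    (∀ (z : S) (w : TS z × Module.Dual ℝ (T₂ (τ₂ z))),
      w ∈ Set.range (fun b : Module.Dual ℝ (T₂ (τ₂ z)) => (πS z ((dτ₂ z).dualMap b), b)) →
      w.2 = 0 → w.1 = 0) ∧
    -- condition (B): pr₁(L₁) = ker dτ₂ = T(τ₂-fibre), pr₁(L₂) = ker dτ₁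
    (∀ z : S, Set.range (fun a : Module.Dual ℝ (T₁ (τ₁ z)) => πS z ((dτ₁ z).dualMap a))
      = {v : TS z | dτ₂ z v = 0}) ∧
    (∀ z : S, Set.range (fun b : Module.Dual ℝ (T₂ (τ₂ z)) => πS z ((dτ₂ z).dualMap b))
      = {v : TS z | dτ₁ z v = 0}) ∧
    -- condition (C): pr₂(L_k) is everything
    (∀ (z : S) (a : Module.Dual ℝ (T₁ (τ₁ z))), ∃ u : TS z,
      (u, a) ∈ Set.range (fun a' : Module.Dual ℝ (T₁ (τ₁ z)) => (πS z ((dτ₁ z).dualMap a'), a'))) ∧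
    (∀ (z : S) (b : Module.Dual ℝ (T₂ (τ₂ z))), ∃ u : TS z,
      (u, b) ∈ Set.range (fun b' : Module.Dual ℝ (T₂ (τ₂ z)) => (πS z ((dτ₂ z).dualMap b'), b'))) := by
  refine ⟨fun z => LinearMap.congr_fun (hPoisson z), fun z => LinearMap.congr_fun (hAnti z),
    ?_, ?_, fun z => ?_, fun z => ?_, fun z a => ⟨_, a, rfl⟩, fun z b => ⟨_, b, rfl⟩⟩
  · rintro z _ ⟨a, rfl⟩ (rfl : a = 0)
    simp
  · rintro z _ ⟨b, rfl⟩ (rfl : b = 0)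
    simp
  · rw [range_comp_dualMap_eq_orthogonal_ker _ _ (hinv₁ z) (hinv₂ z), horth₂]
  · rw [range_comp_dualMap_eq_orthogonal_ker _ _ (hinv₁ z) (hinv₂ z), horth₁]

theorem stmt7
    (S P₁ P₂ : Type) [TopologicalSpace S]
    (TS : S → Type) (T₁ : P₁ → Type) (T₂ : P₂ → Type)
    [∀ z, AddCommGroup (TS z)] [∀ z, Module ℝ (TS z)]
    [∀ p, AddCommGroup (T₁ p)] [∀ p, Module ℝ (T₁ p)]
    [∀ p, AddCommGroup (T₂ p)] [∀ p, Module ℝ (T₂ p)]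
    -- symplectic Poisson structure on S: Π_S^♯ with inverse ω
    (πS : ∀ z, Module.Dual ℝ (TS z) →ₗ[ℝ] TS z)
    (ω : ∀ z, TS z →ₗ[ℝ] Module.Dual ℝ (TS z))
    (hinv₁ : ∀ (z : S) (a : Module.Dual ℝ (TS z)), ω z (πS z a) = a)
    (hinv₂ : ∀ (z : S) (v : TS z), πS z (ω z v) = v)
    (hskew : ∀ (z : S) (v w : TS z), ω z v w = - ω z w v)
    -- Poisson structures on P₁, P₂
    (π₁ : ∀ p, Module.Dual ℝ (T₁ p) →ₗ[ℝ] T₁ p)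
    (π₂ : ∀ p, Module.Dual ℝ (T₂ p) →ₗ[ℝ] T₂ p)
    -- surjective submersions τ₁, τ₂
    (τ₁ : S → P₁) (τ₂ : S → P₂)
    (hτ₁ : Function.Surjective τ₁) (hτ₂ : Function.Surjective τ₂)
    (dτ₁ : ∀ z, TS z →ₗ[ℝ] T₁ (τ₁ z)) (dτ₂ : ∀ z, TS z →ₗ[ℝ] T₂ (τ₂ z))
    (hdτ₁ : ∀ z, Function.Surjective (dτ₁ z)) (hdτ₂ : ∀ z, Function.Surjective (dτ₂ z))
    -- τ₁ Poisson, τ₂ anti-Poisson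
    (hPoisson : ∀ z, (dτ₁ z).comp ((πS z).comp (dτ₁ z).dualMap) = π₁ (τ₁ z))
    (hAnti : ∀ z, (dτ₂ z).comp ((πS z).comp (dτ₂ z).dualMap) = - π₂ (τ₂ z))
    -- connected, simply connected fibres
    (hfib₁ : ∀ p : P₁, IsConnected (τ₁ ⁻¹' {p}) ∧ SimplyConnectedSpace (τ₁ ⁻¹' {p}))
    (hfib₂ : ∀ p : P₂, IsConnected (τ₂ ⁻¹' {p}) ∧ SimplyConnectedSpace (τ₂ ⁻¹' {p}))
    -- ker(dτ₁) = (ker dτ₂)^⊥ and ker(dτ₂) = (ker dτ₁)^⊥ (symplectic orthogonality)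
    (horth₁ : ∀ z, {v : TS z | dτ₁ z v = 0} = {v | ∀ w : TS z, dτ₂ z w = 0 → ω z v w = 0})
    (horth₂ : ∀ z, {v : TS z | dτ₂ z v = 0} = {v | ∀ w : TS z, dτ₁ z w = 0 → ω z v w = 0}) :
    -- L₁ ⊂ τ₁^!(T*P₁): dτ₁(Π_S^♯ τ₁*α) = Π₁^♯ α (anchor of the cotangent algebroid)
    (∀ (z : S) (a : Module.Dual ℝ (T₁ (τ₁ z))),
      dτ₁ z (πS z ((dτ₁ z).dualMap a)) = π₁ (τ₁ z) a) ∧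
    -- L₂ ⊂ τ₂^!(T*P₂)⁻: dτ₂(Π_S^♯ τ₂*β) = −Π₂^♯ β (opposite anchor)
    (∀ (z : S) (b : Module.Dual ℝ (T₂ (τ₂ z))),
      dτ₂ z (πS z ((dτ₂ z).dualMap b)) = - (π₂ (τ₂ z) b)) ∧
    -- condition (A)
    (∀ (z : S) (w : TS z × Module.Dual ℝ (T₁ (τ₁ z))),
      w ∈ Set.range (fun a : Module.Dual ℝ (T₁ (τ₁ z)) => (πS z ((dτ₁ z).dualMap a), a)) →
      w.2 = 0 → w.1 = 0) ∧
    (∀ (z : S) (w : TS z × Module.Dual ℝ (T₂ (τ₂ z))),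
      w ∈ Set.range (fun b : Module.Dual ℝ (T₂ (τ₂ z)) => (πS z ((dτ₂ z).dualMap b), b)) →
      w.2 = 0 → w.1 = 0) ∧
    -- condition (B): pr₁(L₁) = ker dτ₂ = T(τ₂-fibre), pr₁(L₂) = ker dτ₁
    (∀ z : S, Set.range (fun a : Module.Dual ℝ (T₁ (τ₁ z)) => πS z ((dτ₁ z).dualMap a))
      = {v : TS z | dτ₂ z v = 0}) ∧
    (∀ z : S, Set.range (fun b : Module.Dual ℝ (T₂ (τ₂ z)) => πS z ((dτ₂ z).dualMap b))
      = {v : TS z | dτ₁ z v = 0}) ∧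
    -- condition (C): pr₂(L_k) is everything
    (∀ (z : S) (a : Module.Dual ℝ (T₁ (τ₁ z))), ∃ u : TS z,
      (u, a) ∈ Set.range (fun a' : Module.Dual ℝ (T₁ (τ₁ z)) => (πS z ((dτ₁ z).dualMap a'), a'))) ∧
    (∀ (z : S) (b : Module.Dual ℝ (T₂ (τ₂ z))), ∃ u : TS z,
      (u, b) ∈ Set.range (fun b' : Module.Dual ℝ (T₂ (τ₂ z)) => (πS z ((dτ₂ z).dualMap b'), b'))) :=
  stmt7_general S P₁ P₂ TS T₁ T₂ πS ω hinv₁ hinv₂ π₁ π₂ τ₁ τ₂ dτ₁ dτ₂ hPoisson hAnti horth₁ horth₂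
end

section
/- Let (N, D_N) be a Dirac manifold with surjective submersions F₁: N → (M₁, D_{M₁}) and F₂: N → (M₂, D_{M₂}^−) which are strong Dirac maps, and suppose pr₁((Λ₁)_n) = ker(dF₂)_n and pr₁((Λ₂)_n) = ker(dF₁)_n for all n ∈ N, where (Λ_k)_n = (D_N)_n ∩ (T_nN ⊕ Im(dF_k)_n^*). Then the Lie algebroids D_{M₁} and D_{M₂} are quasi-equivalent, with witnessing subbundles L_k = {(u; (dF_k)_n(u), β) : (u, (dF_k)_n^*(β)) ∈ (D_N)_n}. -/
/-!
STATEMENT 9: If (N, D_N) is a Dirac manifold with surjective submersions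
F₁ : N → (M₁, D_{M₁}), F₂ : N → (M₂, D_{M₂}⁻) which are strong Dirac maps and
pr₁((Λ₁)_n) = ker(dF₂)_n, pr₁((Λ₂)_n) = ker(dF₁)_n, where
(Λ_k)_n = (D_N)_n ∩ (T_nN ⊕ Im(dF_k)_n^*), then D_{M₁} and D_{M₂} are quasi-equivalent
via L_k = {(u; (dF_k)(u), β) : (u, (dF_k)*(β)) ∈ D_N}.

Model: pointwise linear algebra.  A Dirac structure is a family of subspaces of
T ⊕ T*, regarded as a Lie algebroid with anchor pr₁; the opposite Dirac structure is
D⁻ = {(Y, −β) : (Y, β) ∈ D}.  The conclusion asserts that L₁, L₂ land in the pull-back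
algebroids and satisfy the quasi-equivalence conditions (A), (B), (C).
-/

theorem stmt9
    (N M₁ M₂ : Type) (TN : N → Type) (T₁ : M₁ → Type) (T₂ : M₂ → Type)
    [∀ n, AddCommGroup (TN n)] [∀ n, Module ℝ (TN n)]
    [∀ m, AddCommGroup (T₁ m)] [∀ m, Module ℝ (T₁ m)]
    [∀ m, AddCommGroup (T₂ m)] [∀ m, Module ℝ (T₂ m)]
    (DN : ∀ n, Submodule ℝ (TN n × Module.Dual ℝ (TN n)))
    (D₁ : ∀ m, Submodule ℝ (T₁ m × Module.Dual ℝ (T₁ m)))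
    (D₂ : ∀ m, Submodule ℝ (T₂ m × Module.Dual ℝ (T₂ m)))
    (F₁ : N → M₁) (F₂ : N → M₂)
    (hF₁ : Function.Surjective F₁) (hF₂ : Function.Surjective F₂)
    (dF₁ : ∀ n, TN n →ₗ[ℝ] T₁ (F₁ n)) (dF₂ : ∀ n, TN n →ₗ[ℝ] T₂ (F₂ n))
    (hdF₁ : ∀ n, Function.Surjective (dF₁ n)) (hdF₂ : ∀ n, Function.Surjective (dF₂ n))
    -- F₁ is a forward Dirac map into (M₁, D₁)
    (hfwd₁ : ∀ n, (D₁ (F₁ n) : Set (T₁ (F₁ n) × Module.Dual ℝ (T₁ (F₁ n)))) =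
      {r | ∃ u : TN n, (u, (dF₁ n).dualMap r.2) ∈ DN n ∧ r.1 = dF₁ n u})
    -- F₂ is a forward Dirac map into (M₂, D₂⁻)
    (hfwd₂ : ∀ n, {r : T₂ (F₂ n) × Module.Dual ℝ (T₂ (F₂ n)) | (r.1, -r.2) ∈ D₂ (F₂ n)} =
      {r | ∃ u : TN n, (u, (dF₂ n).dualMap r.2) ∈ DN n ∧ r.1 = dF₂ n u})
    -- strongness: ker dF_k ∩ ker D_N = {0}
    (hstr₁ : ∀ (n : N) (v : TN n),
      dF₁ n v = 0 → (v, (0 : Module.Dual ℝ (TN n))) ∈ DN n → v = 0)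
    (hstr₂ : ∀ (n : N) (v : TN n),
      dF₂ n v = 0 → (v, (0 : Module.Dual ℝ (TN n))) ∈ DN n → v = 0)
    -- pr₁((Λ₁)_n) = ker(dF₂)_n and pr₁((Λ₂)_n) = ker(dF₁)_n
    (hΛ₁ : ∀ n, {v : TN n | ∃ b : Module.Dual ℝ (T₁ (F₁ n)), (v, (dF₁ n).dualMap b) ∈ DN n}
      = {v | dF₂ n v = 0})
    (hΛ₂ : ∀ n, {v : TN n | ∃ b : Module.Dual ℝ (T₂ (F₂ n)), (v, (dF₂ n).dualMap b) ∈ DN n}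
      = {v | dF₁ n v = 0}) :
    -- abbreviate the witnessing subbundles
    ∀ (L₁ : ∀ n, Set (TN n × (T₁ (F₁ n) × Module.Dual ℝ (T₁ (F₁ n)))))
      (L₂ : ∀ n, Set (TN n × (T₂ (F₂ n) × Module.Dual ℝ (T₂ (F₂ n))))),
    (∀ n, L₁ n = {w | (w.1, (dF₁ n).dualMap w.2.2) ∈ DN n ∧ w.2.1 = dF₁ n w.1}) →
    (∀ n, L₂ n = {w | (w.1, (dF₂ n).dualMap w.2.2) ∈ DN n ∧ w.2.1 = dF₂ n w.1}) →
    -- L₁ ⊂ F₁^!(D₁), L₂ ⊂ F₂^!(D₂⁻): values in the Dirac fibres, matching anchors pr₁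
    ((∀ n, ∀ w ∈ L₁ n, w.2 ∈ D₁ (F₁ n) ∧ dF₁ n w.1 = w.2.1) ∧
     (∀ n, ∀ w ∈ L₂ n, (w.2.1, -w.2.2) ∈ D₂ (F₂ n) ∧ dF₂ n w.1 = w.2.1) ∧
    -- condition (A): L_k ∩ (T_nN ⊕ {0}) = {0}
     (∀ n, ∀ w ∈ L₁ n, w.2 = 0 → w.1 = 0) ∧
     (∀ n, ∀ w ∈ L₂ n, w.2 = 0 → w.1 = 0) ∧
    -- condition (B): pr₁(L₁) = ker dF₂, pr₁(L₂) = ker dF₁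
     (∀ n, Prod.fst '' L₁ n = {v : TN n | dF₂ n v = 0}) ∧
     (∀ n, Prod.fst '' L₂ n = {v : TN n | dF₁ n v = 0}) ∧
    -- condition (C): pr₂(L₁) = (D₁)_{F₁ n}, pr₂(L₂) = (D₂⁻)_{F₂ n}
     (∀ n, Prod.snd '' L₁ n = (D₁ (F₁ n) : Set (T₁ (F₁ n) × Module.Dual ℝ (T₁ (F₁ n))))) ∧
     (∀ n, Prod.snd '' L₂ n =
       {r : T₂ (F₂ n) × Module.Dual ℝ (T₂ (F₂ n)) | (r.1, -r.2) ∈ D₂ (F₂ n)})) := by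

  intro L₁ L₂ hL₁ hL₂
  refine ⟨?_, ?_, ?_, ?_, ?_, ?_, ?_, ?_⟩
  · intro n w hw
    rw [hL₁ n] at hw
    constructor
    · have := (hfwd₁ n).symm ▸ (Set.mem_setOf_eq ▸ ⟨w.1, hw.1, hw.2⟩ :
        w.2 ∈ {r : T₁ (F₁ n) × Module.Dual ℝ (T₁ (F₁ n)) |
          ∃ u : TN n, (u, (dF₁ n).dualMap r.2) ∈ DN n ∧ r.1 = dF₁ n u})
      exact this
    · exact hw.2.symm
  · intro n w hw
    rw [hL₂ n] at hw
    constructor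
    · have h : w.2 ∈ {r : T₂ (F₂ n) × Module.Dual ℝ (T₂ (F₂ n)) |
          ∃ u : TN n, (u, (dF₂ n).dualMap r.2) ∈ DN n ∧ r.1 = dF₂ n u} :=
        ⟨w.1, hw.1, hw.2⟩
      rw [← hfwd₂ n] at h
      exact h
    · exact hw.2.symm
  · intro n w hw h0
    rw [hL₁ n] at hw
    apply hstr₁ n w.1
    · rw [← hw.2, h0]; simp
    · have : w.2.2 = 0 := by rw [h0]; simp
      have hm := hw.1
      rw [this] at hm
      simpa using hm
  · intro n w hw h0
    rw [hL₂ n] at hw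
    apply hstr₂ n w.1
    · rw [← hw.2, h0]; simp
    · have : w.2.2 = 0 := by rw [h0]; simp
      have hm := hw.1
      rw [this] at hm
      simpa using hm
  · intro n
    ext v
    constructor
    · rintro ⟨w, hw, rfl⟩
      rw [hL₁ n] at hw
      have : w.1 ∈ {v : TN n | ∃ b : Module.Dual ℝ (T₁ (F₁ n)),
          (v, (dF₁ n).dualMap b) ∈ DN n} := ⟨w.2.2, hw.1⟩
      rw [hΛ₁ n] at this
      exact this
    · intro hv
      rw [← hΛ₁ n] at hv
      obtain ⟨b, hb⟩ := hv
      refine ⟨(v, (dF₁ n v, b)), ?_, rfl⟩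
      rw [hL₁ n]
      exact ⟨hb, rfl⟩
  · intro n
    ext v
    constructor
    · rintro ⟨w, hw, rfl⟩
      rw [hL₂ n] at hw
      have : w.1 ∈ {v : TN n | ∃ b : Module.Dual ℝ (T₂ (F₂ n)),
          (v, (dF₂ n).dualMap b) ∈ DN n} := ⟨w.2.2, hw.1⟩
      rw [hΛ₂ n] at this
      exact this
    · intro hv
      rw [← hΛ₂ n] at hv
      obtain ⟨b, hb⟩ := hv
      refine ⟨(v, (dF₂ n v, b)), ?_, rfl⟩
      rw [hL₂ n]
      exact ⟨hb, rfl⟩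
  · intro n
    ext r
    constructor
    · rintro ⟨w, hw, rfl⟩
      rw [hL₁ n] at hw
      have h : w.2 ∈ {r : T₁ (F₁ n) × Module.Dual ℝ (T₁ (F₁ n)) |
          ∃ u : TN n, (u, (dF₁ n).dualMap r.2) ∈ DN n ∧ r.1 = dF₁ n u} :=
        ⟨w.1, hw.1, hw.2⟩
      rw [← hfwd₁ n] at h
      exact h
    · intro hr
      have h : r ∈ {r : T₁ (F₁ n) × Module.Dual ℝ (T₁ (F₁ n)) |
          ∃ u : TN n, (u, (dF₁ n).dualMap r.2) ∈ DN n ∧ r.1 = dF₁ n u} := by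
        rw [← hfwd₁ n]; exact hr
      obtain ⟨u, hu, heq⟩ := h
      refine ⟨(u, r), ?_, rfl⟩
      rw [hL₁ n]
      exact ⟨hu, heq⟩
  · intro n
    ext r
    constructor
    · rintro ⟨w, hw, rfl⟩
      rw [hL₂ n] at hw
      have h : w.2 ∈ {r : T₂ (F₂ n) × Module.Dual ℝ (T₂ (F₂ n)) |
          ∃ u : TN n, (u, (dF₂ n).dualMap r.2) ∈ DN n ∧ r.1 = dF₂ n u} :=
        ⟨w.1, hw.1, hw.2⟩
      rw [← hfwd₂ n] at h
      exact h
    · intro hr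
      have h : r ∈ {r : T₂ (F₂ n) × Module.Dual ℝ (T₂ (F₂ n)) |
          ∃ u : TN n, (u, (dF₂ n).dualMap r.2) ∈ DN n ∧ r.1 = dF₂ n u} := by
        rw [← hfwd₂ n]; exact hr
      obtain ⟨u, hu, heq⟩ := h
      refine ⟨(u, r), ?_, rfl⟩
      rw [hL₂ n]
      exact ⟨hu, heq⟩
end

section
/- Let (M, D_M) be a Dirac manifold and let φ: N → N' be a morphism in the subcategory 𝓗(M, D_M) of the Hamiltonian category, i.e. a forward Dirac map φ: N → N' with F = F'∘φ, where F: N → M and F': N' → M are complete strong Dirac maps that are surjective submersions. Then for every section (Y, β) of D_M, the induced Hamiltonian vector fields ζ(Y,β) ∈ 𝔛(N) and ζ'(Y,β) ∈ 𝔛(N') are φ-related: ζ'(Y,β)_{φ(n)} = (dφ)_n(ζ(Y,β)_n) for all n ∈ N. -/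
/-!
STATEMENT 19: For a morphism φ : N → N' in the subcategory 𝓗(M, D_M) of the
Hamiltonian category (φ a forward Dirac map with F = F'∘φ, where F, F' are complete
strong Dirac maps that are surjective submersions), the induced Hamiltonian vector
fields ζ(Y,β) on N and ζ'(Y,β) on N' are φ-related.

Model: pointwise linear algebra, with the chain rule dF = dF' ∘ dφ encoding F = F'∘φ.
The vector fields ζ(Y,β) and ζ'(Y,β) are given by their defining properties.
-/

theorem stmt19
    (N N' M : Type) (TN : N → Type) (TN' : N' → Type) (TM : M → Type)
    [∀ n, AddCommGroup (TN n)] [∀ n, Module ℝ (TN n)]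
    [∀ n, AddCommGroup (TN' n)] [∀ n, Module ℝ (TN' n)]
    [∀ m, AddCommGroup (TM m)] [∀ m, Module ℝ (TM m)]
    (φ : N → N') (F' : N' → M)
    (dφ : ∀ n, TN n →ₗ[ℝ] TN' (φ n))
    (dF' : ∀ n', TN' n' →ₗ[ℝ] TM (F' n'))
    -- F := F' ∘ φ with its differential; chain rule dF = dF' ∘ dφ
    (dF : ∀ n, TN n →ₗ[ℝ] TM (F' (φ n)))
    (hchain : ∀ n, dF n = (dF' (φ n)).comp (dφ n))
    (DN : ∀ n, Submodule ℝ (TN n × Module.Dual ℝ (TN n)))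
    (DN' : ∀ n', Submodule ℝ (TN' n' × Module.Dual ℝ (TN' n')))
    (DM : ∀ m, Submodule ℝ (TM m × Module.Dual ℝ (TM m)))
    -- F and F' surjective submersions
    (hFsurj : Function.Surjective (fun n => F' (φ n))) (hF'surj : Function.Surjective F')
    (hFsub : ∀ n, Function.Surjective (dF n)) (hF'sub : ∀ n', Function.Surjective (dF' n'))
    -- F and F' forward Dirac maps
    (hFforward : ∀ n, (DM (F' (φ n)) : Set (TM (F' (φ n)) × Module.Dual ℝ (TM (F' (φ n))))) =
      {r | ∃ u : TN n, (u, (dF n).dualMap r.2) ∈ DN n ∧ r.1 = dF n u})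
    (hF'forward : ∀ n', (DM (F' n') : Set (TM (F' n') × Module.Dual ℝ (TM (F' n')))) =
      {r | ∃ u : TN' n', (u, (dF' n').dualMap r.2) ∈ DN' n' ∧ r.1 = dF' n' u})
    -- F and F' strong: ker dF ∩ ker D = 0
    (hFstrong : ∀ (n : N) (v : TN n),
      dF n v = 0 → (v, (0 : Module.Dual ℝ (TN n))) ∈ DN n → v = 0)
    (hF'strong : ∀ (n' : N') (v : TN' n'),
      dF' n' v = 0 → (v, (0 : Module.Dual ℝ (TN' n'))) ∈ DN' n' → v = 0)
    -- φ is a forward Dirac map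
    (hφforward : ∀ n, (DN' (φ n) : Set (TN' (φ n) × Module.Dual ℝ (TN' (φ n)))) =
      {r | ∃ u : TN n, (u, (dφ n).dualMap r.2) ∈ DN n ∧ r.1 = dφ n u})
    -- a section (Y, β) of D_M
    (Y : ∀ m, TM m) (β : ∀ m, Module.Dual ℝ (TM m))
    (hsec : ∀ m, (Y m, β m) ∈ DM m)
    -- the induced Hamiltonian vector fields ζ(Y,β) on N and ζ'(Y,β) on N'
    (ζ : ∀ n, TN n) (ζ' : ∀ n', TN' n')
    (hζ : ∀ n, (ζ n, (dF n).dualMap (β (F' (φ n)))) ∈ DN n ∧ dF n (ζ n) = Y (F' (φ n)))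
    (hζ' : ∀ n', (ζ' n', (dF' n').dualMap (β (F' n'))) ∈ DN' n' ∧ dF' n' (ζ' n') = Y (F' n')) :
    ∀ n : N, ζ' (φ n) = dφ n (ζ n) := by
  intro n
  -- (dφ n (ζ n), (dF' (φ n)).dualMap β) ∈ DN' (φ n)
  have h1 : (dφ n (ζ n), (dF' (φ n)).dualMap (β (F' (φ n)))) ∈ DN' (φ n) := by
    have h1' : ((dφ n) (ζ n), (dF' (φ n)).dualMap (β (F' (φ n)))) ∈
        (DN' (φ n) : Set (TN' (φ n) × Module.Dual ℝ (TN' (φ n)))) := by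
      rw [hφforward n]
      refine ⟨ζ n, ?_, rfl⟩
      have h := (hζ n).1
      rw [hchain n] at h
      exact h
    exact h1'
  -- the difference
  have hdiff : (ζ' (φ n) - dφ n (ζ n), (0 : Module.Dual ℝ (TN' (φ n)))) ∈ DN' (φ n) := by
    have := (DN' (φ n)).sub_mem (hζ' (φ n)).1 h1
    simpa using this
  have hker : dF' (φ n) (ζ' (φ n) - dφ n (ζ n)) = 0 := by
    have h2 : dF' (φ n) (dφ n (ζ n)) = Y (F' (φ n)) := by
      have := (hζ n).2
      rw [hchain n] at this
      simpa using this
    rw [map_sub, (hζ' (φ n)).2, h2, sub_self]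
  exact sub_eq_zero.mp (hF'strong (φ n) _ hker hdiff)
end
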